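/- Let θ ∈ (0, π/2) and λ ≥ 2. Let N*_δ = (X_δ, Y_δ) denote a random vector with the selected-step density p*_δ, and let V(δ) = exp(αδ). Then for all sufficiently small α > 0, limsup_{δ→+∞} E[exp(−α·(X_δ cos θ + Y_δ sin θ))] < 1. -/

import Mathlib

open MeasureTheory ProbabilityTheory Real Set Filter

noncomputable def phi (x : ℝ) : ℝ := Real.exp (-x^2/2) / Real.sqrt (2*Real.pi)
noncomputable def Phi (x : ℝ) : ℝ := ∫ u in Set.Iic x, phi u
noncomputable def pdelta (θ δ : ℝ) (z : ℝ × ℝ) : ℝ :=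
  phi z.1 * phi z.2 * Set.indicator (Set.Ici (0:ℝ)) (fun _ => 1)
    (δ - z.1 * Real.cos θ - z.2 * Real.sin θ) / Phi δ
noncomputable def p1 (θ δ x : ℝ) : ℝ :=
  phi x * Phi ((δ - x * Real.cos θ) / Real.sin θ) / Phi δ
noncomputable def F1 (θ δ x : ℝ) : ℝ := ∫ u in Set.Iic x, p1 θ δ u
noncomputable def pstar (lam : ℕ) (θ δ : ℝ) (z : ℝ × ℝ) : ℝ :=
  (lam : ℝ) * pdelta θ δ z * F1 θ δ z.1 ^ (lam - 1)
noncomputable def p1star (lam : ℕ) (θ δ x : ℝ) : ℝ :=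
  (lam : ℝ) * p1 θ δ x * F1 θ δ x ^ (lam - 1)
noncomputable def p2star (lam : ℕ) (θ δ y : ℝ) : ℝ :=
  (lam : ℝ) * (phi y / Phi δ) *
    ∫ u in Set.Iic ((δ - y * Real.sin θ) / Real.cos θ), phi u * F1 θ δ u ^ (lam - 1)

/-!
As δ → ∞ the selected-step density p*_δ converges pointwise to λ φ(x) Φ(x)^(λ-1) φ(y), the
density of (N^(λ), N), and is dominated by a multiple of φ(x) φ(y); by dominated convergence the
expectation tends to the product of the Laplace transforms
L(α) = E[exp(-α cos θ N^(λ))] · E[exp(-α sin θ N)].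
Now L(0) = 1 and L'(0) = -cos θ · E[N^(λ)] < 0: since E[N] = 0,
E[N^(λ)] = λ ∫ x (Φ(x)^(λ-1) - Φ(0)^(λ-1)) φ(x) dx, whose integrand is positive for x ≠ 0.
Hence L(α) < 1 for all small α > 0.
-/

open scoped Topology ENNReal

lemma hasDerivAt_integral_exp_mul_zero {f : ℝ → ℝ} (hf0 : 0 ≤ f) (hf : Measurable f)
    (hexp : ∀ t, Integrable (fun x => exp (t * x) * f x)) :
    HasDerivAt (fun t => ∫ x, exp (t * x) * f x) (∫ x, x * f x) 0 := by
  set μ := volume.withDensity fun x => ((f x).toNNReal : ℝ≥0∞)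
  have hμ (g : ℝ → ℝ) : ∫ x, g x ∂μ = ∫ x, g x * f x := by
    simp only [μ, integral_withDensity_eq_integral_smul hf.real_toNNReal, NNReal.smul_def,
      Real.coe_toNNReal _ (hf0 _), smul_eq_mul, mul_comm]
  have hexpSet : integrableExpSet id μ = univ := by
    ext t
    simp only [integrableExpSet, id, μ, mem_univ, iff_true, Set.mem_ofPred_eq]
    rw [integrable_withDensity_iff_integrable_smul hf.real_toNNReal]
    simpa [NNReal.smul_def, Real.coe_toNNReal _ (hf0 _), mul_comm] using hexp t
  convert hasDerivAt_mgf (X := id) (μ := μ) (t := 0) (by simp [hexpSet]) using 1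
  · ext t; simp [mgf, hμ]
  · simp [hμ]

lemma eventually_lt_of_hasDerivAt_neg {f : ℝ → ℝ} {f' a : ℝ} (hf : HasDerivAt f f' a)
    (hf' : f' < 0) : ∀ᶠ x in 𝓝[>] a, f x < f a := by
  have hslope : ∀ᶠ x in 𝓝[>] a, slope f a x < 0 :=
    ((hasDerivAt_iff_tendsto_slope.1 hf).mono_left
      (nhdsWithin_mono _ fun _ hx => ne_of_gt hx)).eventually_lt_const hf'
  filter_upwards [hslope, self_mem_nhdsWithin] with x hx hax
  rw [slope_def_field, div_neg_iff] at hx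
  rcases hx with ⟨-, h⟩ | ⟨h, -⟩
  · linarith [mem_Ioi.1 hax]
  · linarith

lemma integral_exp_add_mul_prod (f g : ℝ → ℝ) (a b : ℝ) :
    ∫ z : ℝ × ℝ, exp (a * z.1 + b * z.2) * (f z.1 * g z.2)
      = (∫ x, exp (a * x) * f x) * ∫ y, exp (b * y) * g y := by
  simp_rw [exp_add]
  rw [Measure.volume_eq_prod, ← integral_prod_mul]
  congr 1; ext z; ring

lemma integrable_exp_add_mul_prod {f g : ℝ → ℝ} {a b : ℝ}
    (hf : Integrable fun x => exp (a * x) * f x) (hg : Integrable fun y => exp (b * y) * g y) :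
    Integrable fun z : ℝ × ℝ => exp (a * z.1 + b * z.2) * (f z.1 * g z.2) := by
  rw [Measure.volume_eq_prod]
  refine (hf.mul_prod hg).congr (ae_of_all _ fun z => ?_)
  simp only [exp_add]; ring

lemma phi_eq_gaussianPDFReal : phi = gaussianPDFReal 0 1 := by
  ext x
  simp [phi, gaussianPDFReal_def, div_eq_inv_mul]

lemma Phi_eq_cdf : Phi = cdf (gaussianReal 0 1) := by
  ext x
  rw [cdf_eq_real, measureReal_def, gaussianReal_apply_eq_integral _ one_ne_zero,
    ENNReal.toReal_ofReal (setIntegral_nonneg measurableSet_Iic fun _ _ =>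
      gaussianPDFReal_nonneg _ _ _), Phi, phi_eq_gaussianPDFReal]

lemma integrable_gaussianReal_zero_one_iff {g : ℝ → ℝ} :
    Integrable g (gaussianReal 0 1) ↔ Integrable (fun x => g x * phi x) := by
  rw [gaussianReal_of_var_ne_zero _ one_ne_zero, integrable_withDensity_iff
    (measurable_gaussianPDF _ _) (ae_of_all _ fun _ => gaussianPDF_lt_top)]
  simp [toReal_gaussianPDF, phi_eq_gaussianPDFReal]

lemma phi_pos (x : ℝ) : 0 < phi x := by
  rw [phi_eq_gaussianPDFReal]; exact gaussianPDFReal_pos _ _ _ one_ne_zero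

lemma phi_nonneg (x : ℝ) : 0 ≤ phi x := (phi_pos x).le

@[fun_prop]
lemma continuous_phi : Continuous phi := by
  unfold phi; fun_prop

lemma integrable_phi : Integrable phi := by
  rw [phi_eq_gaussianPDFReal]; exact integrable_gaussianPDFReal _ _

lemma integral_phi : ∫ x, phi x = 1 := by
  rw [phi_eq_gaussianPDFReal]; exact integral_gaussianPDFReal_eq_one _ one_ne_zero

lemma integrable_exp_mul_mul_phi (t : ℝ) : Integrable (fun x => exp (t * x) * phi x) :=
  integrable_gaussianReal_zero_one_iff.1 (integrable_exp_mul_gaussianReal t)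

lemma integrable_mul_phi : Integrable (fun x => x * phi x) :=
  integrable_gaussianReal_zero_one_iff.1 ((memLp_id_gaussianReal 1).integrable le_rfl)

lemma integral_mul_phi : ∫ x, x * phi x = 0 := by
  simpa [phi_eq_gaussianPDFReal, integral_gaussianReal_eq_integral_smul, mul_comm] using
    (integral_id_gaussianReal (μ := 0) (v := 1))

lemma Phi_nonneg (x : ℝ) : 0 ≤ Phi x := Phi_eq_cdf ▸ cdf_nonneg _ x

lemma Phi_le_one (x : ℝ) : Phi x ≤ 1 := Phi_eq_cdf ▸ cdf_le_one _ x

lemma tendsto_Phi_atTop : Tendsto Phi atTop (𝓝 1) := Phi_eq_cdf ▸ tendsto_cdf_atTop _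

lemma tendsto_Phi_atBot : Tendsto Phi atBot (𝓝 0) := Phi_eq_cdf ▸ tendsto_cdf_atBot _

lemma hasDerivAt_Phi (x : ℝ) : HasDerivAt Phi (phi x) x := by
  have hPhi : Phi = fun u => Phi 0 + ∫ t in (0:ℝ)..u, phi t := by
    ext u
    rw [← intervalIntegral.integral_Iic_sub_Iic integrable_phi.integrableOn
      integrable_phi.integrableOn, Phi, Phi, add_sub_cancel]
  rw [hPhi]
  exact (continuous_phi.integral_hasStrictDerivAt 0 x).hasDerivAt.const_add _

@[fun_prop]
lemma continuous_Phi : Continuous Phi :=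
  continuous_iff_continuousAt.2 fun x => (hasDerivAt_Phi x).continuousAt

lemma strictMono_Phi : StrictMono Phi :=
  strictMono_of_hasDerivAt_pos hasDerivAt_Phi phi_pos

/-- The density of `N^(λ)`, the maximum of `lam` i.i.d. standard normals. -/
noncomputable def maxPDF (lam : ℕ) (x : ℝ) : ℝ := lam * phi x * Phi x ^ (lam - 1)

section MaxPDF

variable {lam : ℕ}

lemma maxPDF_nonneg (x : ℝ) : 0 ≤ maxPDF lam x := by
  have := phi_nonneg x; have := Phi_nonneg x
  unfold maxPDF; positivity

lemma maxPDF_le (x : ℝ) : maxPDF lam x ≤ lam * phi x :=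
  mul_le_of_le_one_right (by have := phi_nonneg x; positivity)
    (pow_le_one₀ (Phi_nonneg x) (Phi_le_one x))

@[fun_prop]
lemma continuous_maxPDF : Continuous (maxPDF lam) := by
  unfold maxPDF
  exact (continuous_const.mul continuous_phi).mul (continuous_Phi.pow _)

lemma MeasureTheory.Integrable.mul_maxPDF {g : ℝ → ℝ} (hg : Continuous g)
    (h : Integrable (fun x => g x * phi x)) : Integrable (fun x => g x * maxPDF lam x) := by
  refine (h.norm.const_mul lam).mono' (hg.mul continuous_maxPDF).aestronglyMeasurable
    (ae_of_all _ fun x => ?_)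
  rw [norm_mul, norm_mul, Real.norm_of_nonneg (maxPDF_nonneg x),
    Real.norm_of_nonneg (phi_nonneg x), mul_left_comm]
  exact mul_le_mul_of_nonneg_left (maxPDF_le x) (norm_nonneg _)

lemma integral_maxPDF (hlam : lam ≠ 0) : ∫ x, maxPDF lam x = 1 := by
  have hderiv (x : ℝ) : HasDerivAt (fun u => Phi u ^ lam) (maxPDF lam x) x := by
    refine ((hasDerivAt_Phi x).pow lam).congr_deriv ?_
    unfold maxPDF; ring
  have hint : Integrable (maxPDF lam) := by
    simpa using (integrable_exp_mul_mul_phi 0).mul_maxPDF (lam := lam) (by fun_prop)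
  have := integral_of_hasDerivAt_of_tendsto hderiv hint
    (by simpa [zero_pow hlam] using tendsto_Phi_atBot.pow lam)
    (by simpa using tendsto_Phi_atTop.pow lam)
  simpa using this

lemma integral_mul_maxPDF_pos (hlam : 2 ≤ lam) : 0 < ∫ x, x * maxPDF lam x := by
  set k := lam - 1
  have hk : k ≠ 0 := by omega
  set h : ℝ → ℝ := fun x => x * (Phi x ^ k - Phi 0 ^ k) * phi x
  have hmono : StrictMono fun x => Phi x ^ k := fun a b hab =>
    pow_lt_pow_left₀ (strictMono_Phi hab) (Phi_nonneg a) hk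
  have hpos (x : ℝ) (hx : x ≠ 0) : 0 < h x := by
    refine mul_pos ?_ (phi_pos x)
    rcases hx.lt_or_gt with hx | hx
    · exact mul_pos_of_neg_of_neg hx (sub_neg.2 (hmono hx))
    · exact mul_pos hx (sub_pos.2 (hmono hx))
  have hint : Integrable h := by
    refine integrable_mul_phi.norm.mono' (by unfold h; fun_prop) (ae_of_all _ fun x => ?_)
    have hdiff : |Phi x ^ k - Phi 0 ^ k| ≤ 1 :=
      abs_sub_le_of_nonneg_of_le (pow_nonneg (Phi_nonneg x) k) (pow_le_one₀ (Phi_nonneg x)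
        (Phi_le_one x)) (pow_nonneg (Phi_nonneg 0) k) (pow_le_one₀ (Phi_nonneg 0) (Phi_le_one 0))
    simp only [h, norm_mul, Real.norm_eq_abs]
    rw [mul_right_comm]
    exact mul_le_of_le_one_right (by positivity) hdiff
  have hh : ∫ x, x * maxPDF lam x = lam * ∫ x, h x := calc
    ∫ x, x * maxPDF lam x = ∫ x, (lam * h x + lam * Phi 0 ^ k * (x * phi x)) :=
      integral_congr_ae (ae_of_all _ fun x => by simp only [h, maxPDF, k]; ring)
    _ = lam * ∫ x, h x := by
      rw [integral_add (hint.const_mul _) (integrable_mul_phi.const_mul _), integral_const_mul,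
        integral_const_mul, integral_mul_phi, mul_zero, add_zero]
  rw [hh]
  refine mul_pos (by exact_mod_cast (by omega : 0 < lam)) ?_
  refine (integral_pos_iff_support_of_nonneg (fun x => ?_) hint).2 ?_
  · rcases eq_or_ne x 0 with rfl | hx
    · simp [h]
    · exact (hpos x hx).le
  · calc (0 : ℝ≥0∞) < volume (Ioi (0 : ℝ)) := by simp
      _ ≤ volume (Function.support h) := measure_mono fun x hx => (hpos x (ne_of_gt hx)).ne'

lemma eventually_integral_exp_mul_maxPDF_mul_lt_one (hlam : 2 ≤ lam) {c : ℝ}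
    (hc : 0 < c) (s : ℝ) :
    ∀ᶠ α in 𝓝[>] 0,
      (∫ x, exp (-α * c * x) * maxPDF lam x) * (∫ y, exp (-α * s * y) * phi y) < 1 := by
  set L : ℝ → ℝ := fun t => ∫ x, exp (t * x) * maxPDF lam x
  set M : ℝ → ℝ := fun t => ∫ y, exp (t * y) * phi y
  have hL : HasDerivAt L (∫ x, x * maxPDF lam x) 0 :=
    hasDerivAt_integral_exp_mul_zero maxPDF_nonneg continuous_maxPDF.measurable
      fun t => (integrable_exp_mul_mul_phi t).mul_maxPDF (by fun_prop)
  have hM : HasDerivAt M 0 0 := by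
    simpa [integral_mul_phi] using hasDerivAt_integral_exp_mul_zero phi_nonneg
      continuous_phi.measurable integrable_exp_mul_mul_phi
  have hlin (a : ℝ) : HasDerivAt (fun α : ℝ => -α * a) (-a) 0 := by
    simpa using (hasDerivAt_neg (0 : ℝ)).mul_const a
  have hG : HasDerivAt (fun α => L (-α * c) * M (-α * s))
      (-(c * ∫ x, x * maxPDF lam x)) 0 := by
    refine ((HasDerivAt.comp_of_eq 0 hL (hlin c) (by simp)).mul
      (HasDerivAt.comp_of_eq 0 hM (hlin s) (by simp))).congr_deriv ?_
    simp [L, M, integral_maxPDF (by omega : lam ≠ 0), integral_phi]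
    ring
  have hG0 : L (-0 * c) * M (-0 * s) = 1 := by
    simp [L, M, integral_maxPDF (by omega : lam ≠ 0), integral_phi]
  filter_upwards [eventually_lt_of_hasDerivAt_neg hG
    (neg_neg_of_pos (mul_pos hc (integral_mul_maxPDF_pos hlam)))] with α hα
  rwa [hG0] at hα

end MaxPDF

section SelectedStep

variable {lam : ℕ} {θ δ : ℝ}

lemma p1_nonneg (x : ℝ) : 0 ≤ p1 θ δ x :=
  div_nonneg (mul_nonneg (phi_nonneg _) (Phi_nonneg _)) (Phi_nonneg _)

lemma p1_le (x : ℝ) : p1 θ δ x ≤ phi x / Phi δ :=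
  div_le_div_of_nonneg_right (mul_le_of_le_one_right (phi_nonneg x) (Phi_le_one _))
    (Phi_nonneg δ)

lemma integrable_p1 : Integrable (p1 θ δ) :=
  (integrable_phi.div_const (Phi δ)).mono' (by unfold p1; fun_prop)
    (ae_of_all _ fun x => by rw [Real.norm_of_nonneg (p1_nonneg x)]; exact p1_le x)

lemma F1_nonneg (x : ℝ) : 0 ≤ F1 θ δ x :=
  setIntegral_nonneg measurableSet_Iic fun u _ => p1_nonneg u

lemma monotone_F1 : Monotone (F1 θ δ) := fun _ _ hab =>
  setIntegral_mono_set integrable_p1.integrableOn (ae_of_all _ p1_nonneg)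
    (Iic_subset_Iic.2 hab).eventuallyLE

lemma F1_le_inv_Phi (x : ℝ) : F1 θ δ x ≤ (Phi δ)⁻¹ := calc
  F1 θ δ x ≤ ∫ u, p1 θ δ u := setIntegral_le_integral integrable_p1 (ae_of_all _ p1_nonneg)
  _ ≤ ∫ u, phi u / Phi δ := integral_mono integrable_p1 (integrable_phi.div_const _) p1_le
  _ = (Phi δ)⁻¹ := by rw [integral_div, integral_phi, one_div]

lemma tendsto_F1 (hs : 0 < sin θ) (x : ℝ) :
    Tendsto (fun δ => F1 θ δ x) atTop (𝓝 (Phi x)) := by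
  have hnum : Tendsto (fun δ => ∫ u in Iic x, phi u * Phi ((δ - u * cos θ) / sin θ))
      atTop (𝓝 (Phi x)) := by
    refine tendsto_integral_filter_of_dominated_convergence phi
      (Eventually.of_forall fun δ => by fun_prop)
      (Eventually.of_forall fun δ => ae_of_all _ fun u => ?_)
      integrable_phi.integrableOn (ae_of_all _ fun u => ?_)
    · rw [Real.norm_of_nonneg (mul_nonneg (phi_nonneg _) (Phi_nonneg _))]
      exact mul_le_of_le_one_right (phi_nonneg u) (Phi_le_one _)
    · have harg : Tendsto (fun δ => (δ - u * cos θ) / sin θ) atTop atTop :=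
        (tendsto_atTop_add_const_right _ _ tendsto_id).atTop_div_const hs
      simpa using (tendsto_Phi_atTop.comp harg).const_mul (phi u)
  convert hnum.div tendsto_Phi_atTop one_ne_zero using 1
  · ext δ; simp [F1, p1, integral_div]
  · rw [div_one]

lemma pstar_nonneg (z : ℝ × ℝ) : 0 ≤ pstar lam θ δ z := by
  have := phi_nonneg z.1; have := phi_nonneg z.2; have := Phi_nonneg δ
  have := F1_nonneg (θ := θ) (δ := δ) z.1
  have : 0 ≤ (Ici (0 : ℝ)).indicator (fun _ => (1 : ℝ)) (δ - z.1 * cos θ - z.2 * sin θ) :=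
    indicator_nonneg (fun _ _ => zero_le_one) _
  unfold pstar pdelta; positivity

lemma measurable_pstar : Measurable (pstar lam θ δ) := by
  have hind : Measurable fun z : ℝ × ℝ =>
      (Ici (0 : ℝ)).indicator (fun _ => (1 : ℝ)) (δ - z.1 * cos θ - z.2 * sin θ) :=
    (measurable_const.indicator measurableSet_Ici).comp (by fun_prop)
  have hF1 : Measurable (F1 θ δ) := monotone_F1.measurable
  unfold pstar pdelta
  fun_prop

lemma tendsto_pstar (hs : 0 < sin θ) (z : ℝ × ℝ) :
    Tendsto (fun δ => pstar lam θ δ z) atTop (𝓝 (maxPDF lam z.1 * phi z.2)) := by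
  have hind : ∀ᶠ δ in atTop,
      (Ici (0 : ℝ)).indicator (fun _ => (1 : ℝ)) (δ - z.1 * cos θ - z.2 * sin θ) = 1 := by
    filter_upwards [eventually_ge_atTop (z.1 * cos θ + z.2 * sin θ)] with δ hδ
    exact indicator_of_mem (mem_Ici.2 (by linarith)) _
  have hpdelta : Tendsto (fun δ => pdelta θ δ z) atTop (𝓝 (phi z.1 * phi z.2)) := by
    have := (tendsto_const_nhds (x := phi z.1 * phi z.2)).div tendsto_Phi_atTop one_ne_zero
    rw [div_one] at this
    refine this.congr' ?_
    filter_upwards [hind] with δ hδ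
    simp [pdelta, hδ]
  rw [show maxPDF lam z.1 * phi z.2 = lam * (phi z.1 * phi z.2) * Phi z.1 ^ (lam - 1) by
    unfold maxPDF; ring]
  exact (hpdelta.const_mul (lam : ℝ)).mul ((tendsto_F1 hs z.1).pow (lam - 1))

end SelectedStep

lemma exists_eventually_pstar_le (lam : ℕ) (θ : ℝ) :
    ∃ C, ∀ᶠ δ in atTop, ∀ z, pstar lam θ δ z ≤ C * (phi z.1 * phi z.2) := by
  refine ⟨lam * 2 * 2 ^ (lam - 1), ?_⟩
  filter_upwards [tendsto_Phi_atTop.eventually_const_le (by norm_num : (1 : ℝ) / 2 < 1)]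
    with δ hδ z
  have hinv : (Phi δ)⁻¹ ≤ 2 := by
    rw [inv_le_comm₀ (by linarith) two_pos]; linarith
  have hφ : 0 ≤ phi z.1 * phi z.2 := mul_nonneg (phi_nonneg _) (phi_nonneg _)
  have hind : (Ici (0 : ℝ)).indicator (fun _ => (1 : ℝ)) (δ - z.1 * cos θ - z.2 * sin θ) ≤ 1 :=
    indicator_apply_le' (fun _ => le_rfl) (fun _ => zero_le_one)
  have hpdelta : pdelta θ δ z ≤ phi z.1 * phi z.2 * 1 * 2 := by
    rw [pdelta, div_eq_mul_inv]
    gcongr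
  have hF1 : F1 θ δ z.1 ^ (lam - 1) ≤ 2 ^ (lam - 1) :=
    pow_le_pow_left₀ (F1_nonneg _) ((F1_le_inv_Phi _).trans hinv) _
  calc pstar lam θ δ z = lam * pdelta θ δ z * F1 θ δ z.1 ^ (lam - 1) := rfl
    _ ≤ lam * (phi z.1 * phi z.2 * 1 * 2) * 2 ^ (lam - 1) := by
      gcongr; exact pow_nonneg (F1_nonneg _) _
    _ = lam * 2 * 2 ^ (lam - 1) * (phi z.1 * phi z.2) := by ring

lemma tendsto_integral_exp_mul_pstar {lam : ℕ} {θ : ℝ} (hs : 0 < sin θ) (α : ℝ) :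
    Tendsto (fun δ => ∫ z : ℝ × ℝ,
        exp (-α * (z.1 * cos θ + z.2 * sin θ)) * pstar lam θ δ z) atTop
      (𝓝 ((∫ x, exp (-α * cos θ * x) * maxPDF lam x) * ∫ y, exp (-α * sin θ * y) * phi y)) := by
  have hexp (z : ℝ × ℝ) : exp (-α * (z.1 * cos θ + z.2 * sin θ))
      = exp (-α * cos θ * z.1 + -α * sin θ * z.2) := by ring_nf
  obtain ⟨C, hC⟩ := exists_eventually_pstar_le lam θ
  simp_rw [← integral_exp_add_mul_prod, hexp]
  refine tendsto_integral_filter_of_dominated_convergence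
    (fun z => C * (exp (-α * cos θ * z.1 + -α * sin θ * z.2) * (phi z.1 * phi z.2)))
    (Eventually.of_forall fun δ => (by fun_prop : Continuous fun z : ℝ × ℝ =>
      exp (-α * cos θ * z.1 + -α * sin θ * z.2)).aestronglyMeasurable.mul
        measurable_pstar.aestronglyMeasurable) ?_
    ((integrable_exp_add_mul_prod (integrable_exp_mul_mul_phi _)
      (integrable_exp_mul_mul_phi _)).const_mul C)
    (ae_of_all _ fun z => (tendsto_pstar hs z).const_mul _)
  filter_upwards [hC] with δ hδ
  refine ae_of_all _ fun z => ?_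
  rw [Real.norm_of_nonneg (mul_nonneg (exp_pos _).le (pstar_nonneg z)), mul_left_comm]
  exact mul_le_mul_of_nonneg_left (hδ z) (exp_pos _).le

/-- geometric drift: for sufficiently small α > 0,
limsup_{δ→∞} E[exp(−α (X_δ cos θ + Y_δ sin θ))] < 1. -/
theorem stmt15 (lam : ℕ) (hlam : 2 ≤ lam) (θ : ℝ)
    (hθ : θ ∈ Set.Ioo 0 (Real.pi/2)) :
    ∃ α₀ > (0:ℝ), ∀ α : ℝ, 0 < α → α < α₀ →
      Filter.limsup
        (fun δ => ∫ z : ℝ × ℝ,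
          Real.exp (-α * (z.1 * Real.cos θ + z.2 * Real.sin θ)) * pstar lam θ δ z)
        Filter.atTop < 1 := by
  obtain ⟨hθ0, hθ2⟩ := hθ
  have hs : 0 < sin θ := sin_pos_of_pos_of_lt_pi hθ0 (by linarith [pi_pos])
  have hc : 0 < cos θ := cos_pos_of_mem_Ioo ⟨by linarith [pi_pos], hθ2⟩
  have hdrift : ∀ᶠ α in 𝓝[>] 0, limsup (fun δ => ∫ z : ℝ × ℝ,
      exp (-α * (z.1 * cos θ + z.2 * sin θ)) * pstar lam θ δ z) atTop < 1 := by
    filter_upwards [eventually_integral_exp_mul_maxPDF_mul_lt_one hlam hc (sin θ)] with α hα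
    rwa [(tendsto_integral_exp_mul_pstar hs α).limsup_eq]
  obtain ⟨α₀, hα₀, hsub⟩ := mem_nhdsGT_iff_exists_Ioo_subset.1 hdrift
  exact ⟨α₀, hα₀, fun α h0 h1 => hsub ⟨h0, h1⟩⟩
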